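/- Let γ > 0, δ > 0, σ > 0, and set α² = γ²·coth δ and β² = γ⁻²·coth δ. Then for all t, ω ∈ ℝ, (1/(2π))·∫_ℝ e^{−iωs}·σ²·Q_{2δ}^{(γ)}(t + s/2, t − s/2) ds = (σ²/(2π cosh δ))·exp(−t²/α² − ω²/β²), where Q_{2δ}^{(γ)}(x,y) = (γ·√(2π sinh 2δ))^{−1}·exp{−(1/(4γ²))·[coth δ·(x−y)² + tanh δ·(x+y)²]}. -/

import Mathlib

open Real MeasureTheory Complex

/-- The Mehler kernel of the operator `P_{2δ}^{(γ)}`: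
`Q_{2δ}^{(γ)}(x,y) = (γ·√(2π sinh 2δ))⁻¹·exp{−(1/(4γ²))·[coth δ·(x−y)² + tanh δ·(x+y)²]}`. -/
noncomputable def mehlerQtwo (γ δ x y : ℝ) : ℝ :=
  (γ * Real.sqrt (2 * π * Real.sinh (2 * δ)))⁻¹ *
    Real.exp (-(1 / (4 * γ ^ 2)) *
      ((Real.cosh δ / Real.sinh δ) * (x - y) ^ 2 + Real.tanh δ * (x + y) ^ 2))

/-
In the Wigner coordinates `x = t + s/2`, `y = t - s/2` one has `x - y = s` and `x + y = 2t`, so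
the Mehler kernel splits into a Gaussian in `t` times the Gaussian `exp(-b s²)` with
`b = coth δ / (4γ²)`. The spectrum is then the Fourier transform of the `s`-Gaussian,
`√(π/b)·exp(-ω²/(4b))`, and `√(π/b)` cancels the normalization of `Q` up to `1/cosh δ`
because `sinh 2δ = 2 sinh δ cosh δ`.
-/

theorem mehlerQtwo_add_half_sub_half (γ δ t s : ℝ) :
    mehlerQtwo γ δ (t + s / 2) (t - s / 2) =
      (γ * √(2 * π * Real.sinh (2 * δ)))⁻¹ * rexp (-(Real.tanh δ * t ^ 2 / γ ^ 2)) *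
        rexp (-(Real.cosh δ / Real.sinh δ / (4 * γ ^ 2)) * s ^ 2) := by
  rw [mehlerQtwo, mul_assoc _ (rexp _), ← Real.exp_add]
  ring_nf

theorem integral_cexp_neg_I_mul_ofReal_gaussian {b : ℝ} (hb : 0 < b) (K ω : ℝ) :
    ∫ s : ℝ, cexp (-I * ω * s) * ((K * rexp (-b * s ^ 2) : ℝ) : ℂ) =
      ((K * √(π / b) * rexp (-ω ^ 2 / (4 * b)) : ℝ) : ℂ) := by
  have hsqrt : ((π : ℂ) / b) ^ (1 / 2 : ℂ) = ((√(π / b) : ℝ) : ℂ) := by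
    rw [Real.sqrt_eq_rpow, Complex.ofReal_cpow (by positivity)]
    push_cast
    ring_nf
  calc ∫ s : ℝ, cexp (-I * ω * s) * ((K * rexp (-b * s ^ 2) : ℝ) : ℂ)
      = K * ∫ s : ℝ, cexp (I * (-ω : ℂ) * s) * cexp (-(b : ℂ) * s ^ 2) := by
        rw [← integral_const_mul]
        congr 1 with s
        push_cast
        ring_nf
    _ = K * (((π : ℂ) / b) ^ (1 / 2 : ℂ) * cexp (-(-ω : ℂ) ^ 2 / (4 * b))) := by
        rw [fourierIntegral_gaussian (by simpa using hb)]
    _ = ((K * √(π / b) * rexp (-ω ^ 2 / (4 * b)) : ℝ) : ℂ) := by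
        rw [hsqrt]
        push_cast
        ring_nf

theorem inv_mul_sqrt_pi_div_coth_eq_inv_cosh {γ δ : ℝ} (hγ : 0 < γ) (hδ : 0 < δ) :
    (γ * √(2 * π * Real.sinh (2 * δ)))⁻¹ *
        √(π / (Real.cosh δ / Real.sinh δ / (4 * γ ^ 2))) =
      (Real.cosh δ)⁻¹ := by
  have hs : 0 < Real.sinh δ := sinh_pos_iff.mpr hδ
  have hs2 : 0 < Real.sinh (2 * δ) := sinh_pos_iff.mpr (by linarith)
  have hc : 0 < Real.cosh δ := cosh_pos δ
  have hsquare : π / (Real.cosh δ / Real.sinh δ / (4 * γ ^ 2)) =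
      (γ * √(2 * π * Real.sinh (2 * δ)) / Real.cosh δ) ^ 2 := by
    rw [div_pow, mul_pow, sq_sqrt (by positivity), Real.sinh_two_mul]
    field_simp
    ring
  rw [hsquare, sqrt_sq (by positivity)]
  field_simp

theorem wigner_ville_spectrum_general (γ δ σ : ℝ) (hγ : 0 < γ) (hδ : 0 < δ)
    (α β : ℝ)
    (hα : α ^ 2 = γ ^ 2 * (Real.cosh δ / Real.sinh δ))
    (hβ : β ^ 2 = γ⁻¹ ^ 2 * (Real.cosh δ / Real.sinh δ)) (t ω : ℝ) :
    (1 / (2 * (π : ℂ))) * ∫ s : ℝ,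
        Complex.exp (-Complex.I * (ω : ℂ) * (s : ℂ)) *
          ((σ ^ 2 * mehlerQtwo γ δ (t + s / 2) (t - s / 2) : ℝ) : ℂ) =
      (((σ ^ 2 / (2 * π * Real.cosh δ)) *
          Real.exp (-(t ^ 2) / α ^ 2 - ω ^ 2 / β ^ 2) : ℝ) : ℂ) := by
  have hs : 0 < Real.sinh δ := sinh_pos_iff.mpr hδ
  have hc : 0 < Real.cosh δ := cosh_pos δ
  set b := Real.cosh δ / Real.sinh δ / (4 * γ ^ 2)
  have hb : 0 < b := by positivity
  have ht : -(Real.tanh δ * t ^ 2 / γ ^ 2) = -t ^ 2 / α ^ 2 := by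
    rw [hα, Real.tanh_eq_sinh_div_cosh]
    field_simp
  have hω : -ω ^ 2 / (4 * b) = -ω ^ 2 / β ^ 2 := by
    simp only [b, hβ]
    field_simp
  simp_rw [mehlerQtwo_add_half_sub_half, ← mul_assoc]
  rw [integral_cexp_neg_I_mul_ofReal_gaussian hb, ht, hω, sub_eq_add_neg, ← neg_div,
    Real.exp_add, show 1 / (2 * (π : ℂ)) = ((1 / (2 * π) : ℝ) : ℂ) by push_cast; rfl,
    ← ofReal_mul, ofReal_inj]
  linear_combination (σ ^ 2 / (2 * π) * rexp (-t ^ 2 / α ^ 2) * rexp (-ω ^ 2 / β ^ 2)) *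
    inv_mul_sqrt_pi_div_coth_eq_inv_cosh hγ hδ

/-- Appendix A of the paper (equation (7)): the Wigner–Ville spectrum of the white Gaussian
noise response of the time–frequency localization filter. With autocorrelation
`r(t₁,t₂) = σ²·Q_{2δ}^{(γ)}(t₁,t₂)` and `α² = γ²·coth δ`, `β² = γ⁻²·coth δ`,
`(1/(2π))·∫_ℝ e^{−iωs}·r(t+s/2, t−s/2) ds = (σ²/(2π cosh δ))·exp(−t²/α² − ω²/β²)`. -/
theorem wigner_ville_spectrum (γ δ σ : ℝ) (hγ : 0 < γ) (hδ : 0 < δ) (hσ : 0 < σ)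
    (α β : ℝ)
    (hα : α ^ 2 = γ ^ 2 * (Real.cosh δ / Real.sinh δ))
    (hβ : β ^ 2 = γ⁻¹ ^ 2 * (Real.cosh δ / Real.sinh δ)) (t ω : ℝ) :
    (1 / (2 * (π : ℂ))) * ∫ s : ℝ,
        Complex.exp (-Complex.I * (ω : ℂ) * (s : ℂ)) *
          ((σ ^ 2 * mehlerQtwo γ δ (t + s / 2) (t - s / 2) : ℝ) : ℂ) =
      (((σ ^ 2 / (2 * π * Real.cosh δ)) *
          Real.exp (-(t ^ 2) / α ^ 2 - ω ^ 2 / β ^ 2) : ℝ) : ℂ) :=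
  wigner_ville_spectrum_general γ δ σ hγ hδ α β hα hβ t ω
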